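/- arXiv:2204.10932 — 6 statements merged into one kernel-verified Lean document; each statement's English description precedes it below -/
import Mathlib

section
/- A vertex w is the unique LCA of u and v in a finite DAG G if and only if Anc(u) ∩ Anc(v) = Anc(w). -/
variable {V : Type*}

/-- Reflexive-transitive reachability along directed edges. -/
def Reach (E : V → V → Prop) : V → V → Prop := Relation.ReflTransGen E

/-- Set of (reflexive) ancestors of `u`. -/
def Anc (E : V → V → Prop) (u : V) : Set V := {x | Reach E x u}

/-- `w` is a lowest common ancestor of `u` and `v`. -/
def IsLCA (E : V → V → Prop) (u v w : V) : Prop :=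
  Reach E w u ∧ Reach E w v ∧
    ∀ y, y ≠ w → Reach E w y → ¬(Reach E y u ∧ Reach E y v)

/-- The set of LCAs of `u` and `v`. -/
def LCAset (E : V → V → Prop) (u v : V) : Set V := {w | IsLCA E u v w}

/-- The directed graph given by `E` is acyclic (reachability is antisymmetric). -/
def IsDAG (E : V → V → Prop) : Prop :=
  ∀ u v : V, Reach E u v → Reach E v u → u = v

theorem stmt_4 [Fintype V] (E : V → V → Prop) (hdag : IsDAG E) (u v w : V)
    (hca : ∃ c : V, Reach E c u ∧ Reach E c v) :
    LCAset E u v = {w} ↔ Anc E u ∩ Anc E v = Anc E w := by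
  -- every common ancestor reaches some LCA
  have key : ∀ x : V, Reach E x u → Reach E x v → ∃ m, Reach E x m ∧ IsLCA E u v m := by
    intro x hxu hxv
    classical
    let r : V → V → Prop := fun a b => Reach E b a ∧ a ≠ b
    haveI : IsTrans V r := ⟨by
      rintro a b c ⟨hba, hab⟩ ⟨hcb, hbc⟩
      refine ⟨hcb.trans hba, ?_⟩
      rintro rfl
      exact hbc (hdag _ _ hba hcb)⟩
    haveI : IsIrrefl V r := ⟨fun a h => h.2 rfl⟩
    have hwf : WellFounded r := Finite.wellFounded_of_trans_of_irrefl r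
    have hS : x ∈ {y | Reach E x y ∧ Reach E y u ∧ Reach E y v} :=
      ⟨Relation.ReflTransGen.refl, hxu, hxv⟩
    obtain ⟨m, ⟨hxm, hmu, hmv⟩, hmin⟩ := hwf.has_min _ ⟨x, hS⟩
    refine ⟨m, hxm, hmu, hmv, ?_⟩
    rintro y hy hmy ⟨hyu, hyv⟩
    exact hmin y ⟨hxm.trans hmy, hyu, hyv⟩ ⟨hmy, hy⟩
  constructor
  · intro h
    have hw : IsLCA E u v w := by
      have : w ∈ LCAset E u v := h ▸ Set.mem_singleton w
      exact this
    ext x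
    simp only [Set.mem_inter_iff, Anc, Set.mem_setOf_eq]
    constructor
    · rintro ⟨hxu, hxv⟩
      obtain ⟨m, hxm, hm⟩ := key x hxu hxv
      have : m ∈ LCAset E u v := hm
      rw [h] at this
      exact this ▸ hxm
    · intro hxw
      exact ⟨hxw.trans hw.1, hxw.trans hw.2.1⟩
  · intro h
    have hwc : Reach E w u ∧ Reach E w v := by
      have : w ∈ Anc E u ∩ Anc E v := by
        rw [h]; exact Relation.ReflTransGen.refl
      exact this
    have hw : IsLCA E u v w := by
      refine ⟨hwc.1, hwc.2, ?_⟩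
      rintro y hy hwy ⟨hyu, hyv⟩
      have : y ∈ Anc E w := by rw [← h]; exact ⟨hyu, hyv⟩
      exact hy (hdag _ _ this hwy)
    ext m
    simp only [LCAset, Set.mem_setOf_eq, Set.mem_singleton_iff]
    constructor
    · rintro ⟨hmu, hmv, hmax⟩
      by_contra hmw
      have hmw' : Reach E m w := by
        have : m ∈ Anc E w := by rw [← h]; exact ⟨hmu, hmv⟩
        exact this
      exact hmax w (fun e => hmw e.symm) hmw' ⟨hwc.1, hwc.2⟩
    · rintro rfl; exact hw
end

section
/- Let G be a finite DAG and let u, v be vertices such that LCA(u,v) = {a, b} with a, b distinct. Then Anc(u) ∩ Anc(v) = Anc(a) ∪ Anc(b). -/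
variable {V : Type*}

theorem stmt_5 [Fintype V] (E : V → V → Prop) (hdag : IsDAG E) (u v a b : V)
    (hab : a ≠ b) (ha : IsLCA E u v a) (hb : IsLCA E u v b)
    (hL : LCAset E u v = {a, b}) :
    Anc E u ∩ Anc E v = Anc E a ∪ Anc E b := by
  have key : ∀ x : V, Reach E x u → Reach E x v → ∃ w, IsLCA E u v w ∧ Reach E x w := by
    -- strict descendant relation
    let r : V → V → Prop := fun y z => Reach E z y ∧ z ≠ y
    haveI : IsTrans V r := ⟨by
      rintro p q s ⟨h1, h2⟩ ⟨h3, h4⟩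
      refine ⟨h3.trans h1, ?_⟩
      rintro rfl
      exact h2 (hdag _ _ h1 h3)⟩
    haveI : IsIrrefl V r := ⟨fun p h => h.2 rfl⟩
    have wf : WellFounded r := Finite.wellFounded_of_trans_of_irrefl r
    intro x
    induction x using wf.induction with
    | _ x ih =>
      intro hxu hxv
      by_cases hx : IsLCA E u v x
      · exact ⟨x, hx, Relation.ReflTransGen.refl⟩
      · simp only [IsLCA, not_and, not_forall] at hx
        obtain ⟨y, hy1, hy2, hy3⟩ := hx hxu hxv
        push_neg at hy3
        obtain ⟨w, hw, hxw⟩ := ih y ⟨hy2, fun h => hy1 h.symm⟩ hy3.1 hy3.2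
        exact ⟨w, hw, hy2.trans hxw⟩
  ext x
  constructor
  · rintro ⟨hxu, hxv⟩
    obtain ⟨w, hw, hxw⟩ := key x hxu hxv
    have : w ∈ LCAset E u v := hw
    rw [hL] at this
    rcases this with rfl | rfl
    · exact Or.inl hxw
    · exact Or.inr hxw
  · rintro (h | h)
    · exact ⟨h.trans ha.1, h.trans ha.2.1⟩
    · exact ⟨h.trans hb.1, h.trans hb.2.1⟩
end

section
/- Let G be a finite DAG and suppose Anc(u) ∩ Anc(v) = Anc(a) ∪ Anc(b) for vertices a, b. Then either LCA(u,v) = {a, b}, or exactly one of a, b is the unique LCA of u and v (and the other is a common ancestor of u and v). -/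
variable {V : Type*}

theorem stmt_6 [Fintype V] (E : V → V → Prop) (hdag : IsDAG E) (u v a b : V)
    (h : Anc E u ∩ Anc E v = Anc E a ∪ Anc E b) :
    LCAset E u v = {a, b} ∨
      (LCAset E u v = {a} ∧ Reach E b u ∧ Reach E b v) ∨
      (LCAset E u v = {b} ∧ Reach E a u ∧ Reach E a v) := by

  have hmem : ∀ x, (Reach E x u ∧ Reach E x v) ↔ (Reach E x a ∨ Reach E x b) := by
    intro x
    have := Set.ext_iff.mp h x
    simpa [Anc, Set.mem_inter_iff] using this
  have ha : Reach E a u ∧ Reach E a v := (hmem a).mpr (Or.inl Relation.ReflTransGen.refl)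
  have hb : Reach E b u ∧ Reach E b v := (hmem b).mpr (Or.inr Relation.ReflTransGen.refl)
  have hsub : ∀ w, IsLCA E u v w → w = a ∨ w = b := by
    intro w hw
    rcases (hmem w).mp ⟨hw.1, hw.2.1⟩ with hwa | hwb
    · left; by_contra hne
      exact hw.2.2 a (fun e => hne e.symm) hwa ha
    · right; by_contra hne
      exact hw.2.2 b (fun e => hne e.symm) hwb hb
  have hLCAa : ¬(Reach E a b ∧ a ≠ b) → IsLCA E u v a := by
    intro hn
    refine ⟨ha.1, ha.2, ?_⟩
    intro y hy hay hyuv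
    rcases (hmem y).mp hyuv with hya | hyb
    · exact hy (hdag y a hya hay)
    · refine hn ⟨hay.trans hyb, fun hab => ?_⟩
      subst hab
      exact hy (hdag y a hyb hay)
  have hLCAb : ¬(Reach E b a ∧ b ≠ a) → IsLCA E u v b := by
    intro hn
    refine ⟨hb.1, hb.2, ?_⟩
    intro y hy hby hyuv
    rcases (hmem y).mp hyuv with hya | hyb
    · refine hn ⟨hby.trans hya, fun hba => ?_⟩
      subst hba
      exact hy (hdag y b hya hby)
    · exact hy (hdag y b hyb hby)
  by_cases hab : Reach E a b ∧ a ≠ b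
  · -- a reaches b strictly, so b is the unique LCA
    right; right
    refine ⟨?_, ha.1, ha.2⟩
    have hnb : ¬(Reach E b a ∧ b ≠ a) := by
      rintro ⟨hba, hne⟩
      exact hne (hdag b a hba hab.1)
    ext w
    simp only [LCAset, Set.mem_setOf_eq, Set.mem_singleton_iff]
    constructor
    · intro hw
      rcases hsub w hw with rfl | rfl
      · exact absurd (hw.2.2 b (Ne.symm hab.2) hab.1 hb) (fun x => x)
      · rfl
    · rintro rfl; exact hLCAb hnb
  · by_cases hba : Reach E b a ∧ b ≠ a
    · right; left
      refine ⟨?_, hb.1, hb.2⟩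
      ext w
      simp only [LCAset, Set.mem_setOf_eq, Set.mem_singleton_iff]
      constructor
      · intro hw
        rcases hsub w hw with rfl | rfl
        · rfl
        · exact absurd (hw.2.2 a (Ne.symm hba.2) hba.1 ha) (fun x => x)
      · rintro rfl; exact hLCAa hab
    · left
      ext w
      simp only [LCAset, Set.mem_setOf_eq, Set.mem_insert_iff, Set.mem_singleton_iff]
      constructor
      · exact hsub w
      · rintro (rfl | rfl)
        · exact hLCAa hab
        · exact hLCAb hba
end

section
/- In the construction G' of the previous lemma, for all vertices w and v of G: w reaches v in G if and only if w' reaches v'' in G'. Consequently, the set of ancestors of v'' lying in V' is exactly the copy of Anc_G(v). -/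
variable {V : Type*}

/-- Edge relation of the graph `G'` built from `G`: two copies `V'` (left) and
`V''` (middle) of the vertices plus an extra vertex `x` (right). -/
def AddOneLCAEdge (E : V → V → Prop) : (V ⊕ V ⊕ Unit) → (V ⊕ V ⊕ Unit) → Prop
  | .inl u, .inl v => E u v                -- edges of G between the V' copies
  | .inl u, .inr (.inl v) => u = v         -- edge (u', u'')
  | .inr (.inr _), .inr (.inl _) => True   -- edge (x, u'') for every u
  | _, _ => False

lemma noexit (E : V → V → Prop) {u : V} {b : V ⊕ V ⊕ Unit}
    (h : Reach (AddOneLCAEdge E) (.inr (.inl u)) b) : b = .inr (.inl u) := by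
  rcases Relation.reflTransGen_iff_eq_or_transGen.mp h with h | h
  · exact h
  · obtain ⟨c, hc, -⟩ := Relation.TransGen.head'_iff.mp h
    exact absurd hc (by simp [AddOneLCAEdge])

lemma reach_inl_aux (E : V → V → Prop) {a b : V ⊕ V ⊕ Unit}
    (h : Reach (AddOneLCAEdge E) a b) :
    ∀ w v : V, a = .inl w → b = .inr (.inl v) → Reach E w v := by
  induction h using Relation.ReflTransGen.head_induction_on with
  | refl =>
    intro w v hw hv; rw [hw] at hv; exact absurd hv (by simp)
  | @head c d hab h' ih =>
    intro w v hw hv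
    subst hw
    match d, hab with
    | .inl u, hab =>
      exact Relation.ReflTransGen.head hab (ih u v rfl hv)
    | .inr (.inl u), hab =>
      have hcu : w = u := hab
      obtain rfl : u = v := by simpa using (noexit E h').symm.trans hv
      exact hcu ▸ Relation.ReflTransGen.refl

lemma reach_copy (E : V → V → Prop) {w v : V} (h : Reach E w v) :
    Reach (AddOneLCAEdge E) (.inl w) (.inl v) := by
  induction h with
  | refl => exact Relation.ReflTransGen.refl
  | tail _ he ih => exact Relation.ReflTransGen.tail ih he

theorem stmt_8 [Fintype V] (E : V → V → Prop) (hdag : IsDAG E) :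
    (∀ w v : V,
      Reach E w v ↔ Reach (AddOneLCAEdge E) (.inl w) (.inr (.inl v))) ∧
    ∀ v : V,
      {w : V | (Sum.inl w : V ⊕ V ⊕ Unit) ∈ Anc (AddOneLCAEdge E) (.inr (.inl v))}
        = Anc E v := by
  have key : ∀ w v : V,
      Reach E w v ↔ Reach (AddOneLCAEdge E) (.inl w) (.inr (.inl v)) := by
    intro w v
    constructor
    · intro h
      exact Relation.ReflTransGen.tail (reach_copy E h) (rfl : v = v)
    · intro h
      exact reach_inl_aux E h w v rfl rfl
  refine ⟨key, fun v => ?_⟩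
  ext w
  simp only [Set.mem_setOf_eq, Anc, Reach]
  exact (key w v).symm
end

section
/- Let G be a finite DAG with topological ordering π and let U be a suffix of π. Then for all u, v ∈ U, the set of LCAs of u and v in the induced subgraph G[U] equals LCA_G(u,v) ∩ U. -/
variable {V : Type*}

theorem stmt_10 [Fintype V] (E : V → V → Prop) (π : V → ℕ)
    (hinj : Function.Injective π) (hedge : ∀ u v : V, E u v → π u < π v)
    (U : Set V) (hU : ∀ w ∈ U, ∀ w' : V, π w ≤ π w' → w' ∈ U) :
    ∀ u v : U,
      LCAset (fun a b : U => E a b) u v =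
        {w : U | (w : V) ∈ LCAset E (u : V) (v : V)} := by
  have hmono : ∀ {a b : V}, Reach E a b → π a ≤ π b := by
    intro a b h
    induction h with
    | refl => exact le_refl _
    | tail _ hbc ih => exact ih.trans (hedge _ _ hbc).le
  have hmem : ∀ {a b : V}, a ∈ U → Reach E a b → b ∈ U := fun ha h =>
    hU _ ha _ (hmono h)
  have hproj : ∀ {a b : U}, Reach (fun a b : U => E a b) a b → Reach E a b := by
    intro a b h
    induction h with
    | refl => exact Relation.ReflTransGen.refl
    | tail _ hbc ih => exact ih.tail hbc
  have hlift : ∀ {a b : V} (ha : a ∈ U) (hb : b ∈ U), Reach E a b →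
      Reach (fun a b : U => E a b) ⟨a, ha⟩ ⟨b, hb⟩ := by
    intro a b ha hb h
    induction h with
    | refl => exact Relation.ReflTransGen.refl
    | @tail c d hcd hcd' ih =>
        exact (ih (hmem ha hcd)).tail hcd'
  intro u v
  ext w
  simp only [LCAset, IsLCA, Set.mem_setOf_eq]
  constructor
  · rintro ⟨h1, h2, h3⟩
    refine ⟨hproj h1, hproj h2, ?_⟩
    intro y hy hwy ⟨hyu, hyv⟩
    have hyU : y ∈ U := hmem w.2 hwy
    exact h3 ⟨y, hyU⟩ (fun h => hy (congrArg Subtype.val h))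
      (hlift w.2 hyU hwy) ⟨hlift hyU u.2 hyu, hlift hyU v.2 hyv⟩
  · rintro ⟨h1, h2, h3⟩
    refine ⟨hlift w.2 u.2 h1, hlift w.2 v.2 h2, ?_⟩
    intro y hy hwy ⟨hyu, hyv⟩
    exact h3 y (fun h => hy (Subtype.ext h)) (hproj hwy) ⟨hproj hyu, hproj hyv⟩
end

section
/- Let G be a finite DAG, u, v vertices with topologically latest LCA ℓ₁ (with respect to a fixed topological ordering π), and let W be any set of vertices each of which occurs strictly later than all LCAs of u and v other than ℓ₁ in π. Then Anc(u) ∩ Anc(v) ∩ W = Anc(ℓ₁) ∩ W. -/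
variable {V : Type*}

lemma reach_mono {E : V → V → Prop} {π : V → ℕ} (hedge : ∀ u v : V, E u v → π u < π v)
    {a b : V} (h : Reach E a b) : π a ≤ π b := by
  induction h with
  | refl => exact le_refl _
  | tail _ e ih => exact ih.trans (hedge _ _ e).le

lemma reach_strict {E : V → V → Prop} {π : V → ℕ} (hedge : ∀ u v : V, E u v → π u < π v)
    {a b : V} (h : Reach E a b) (hne : a ≠ b) : π a < π b := by
  cases (Relation.ReflTransGen.cases_head h) with
  | inl h => exact absurd h hne
  | inr h =>
    obtain ⟨c, hac, hcb⟩ := h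
    exact (hedge _ _ hac).trans_le (reach_mono hedge hcb)

lemma exists_lca_above [Fintype V] (E : V → V → Prop) (π : V → ℕ) (u v : V)
    (hedge : ∀ a b : V, E a b → π a < π b)
    {x : V} (hxu : Reach E x u) (hxv : Reach E x v) :
    ∃ m, Reach E x m ∧ m ∈ LCAset E u v := by
  classical
  let S : Finset V := Finset.univ.filter (fun c => Reach E x c ∧ Reach E c u ∧ Reach E c v)
  have hxS : x ∈ S := by
    simp only [S, Finset.mem_filter, Finset.mem_univ, true_and]
    exact ⟨Relation.ReflTransGen.refl, hxu, hxv⟩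
  obtain ⟨m, hmS, hmmax⟩ := S.exists_max_image π ⟨x, hxS⟩
  simp only [S, Finset.mem_filter, Finset.mem_univ, true_and] at hmS
  refine ⟨m, hmS.1, hmS.2.1, hmS.2.2, ?_⟩
  intro y hy hmy ⟨hyu, hyv⟩
  have hyS : y ∈ S := by
    simp only [S, Finset.mem_filter, Finset.mem_univ, true_and]
    exact ⟨hmS.1.trans hmy, hyu, hyv⟩
  exact absurd (hmmax y hyS) (not_le.mpr (reach_strict hedge hmy (Ne.symm hy)))

theorem stmt_11 [Fintype V] (E : V → V → Prop) (π : V → ℕ)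
    (hinj : Function.Injective π) (hedge : ∀ u v : V, E u v → π u < π v)
    (u v ℓ₁ : V) (hca : ∃ c : V, Reach E c u ∧ Reach E c v)
    (hℓ₁ : ℓ₁ ∈ LCAset E u v) (hmax : ∀ w ∈ LCAset E u v, π w ≤ π ℓ₁)
    (W : Set V)
    (hW : ∀ w ∈ LCAset E u v, w ≠ ℓ₁ → ∀ x ∈ W, π w < π x) :
    Anc E u ∩ Anc E v ∩ W = Anc E ℓ₁ ∩ W := by
  ext x
  simp only [Set.mem_inter_iff, Set.mem_setOf_eq, Anc, Reach] at *
  constructor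
  · rintro ⟨⟨hxu, hxv⟩, hxW⟩
    refine ⟨?_, hxW⟩
    obtain ⟨m, hxm, hm⟩ := exists_lca_above E π u v hedge hxu hxv
    by_cases hme : m = ℓ₁
    · exact hme ▸ hxm
    · exact absurd (hW m hm hme x hxW) (not_lt.mpr (reach_mono hedge hxm))
  · rintro ⟨hxl, hxW⟩
    exact ⟨⟨hxl.trans hℓ₁.1, hxl.trans hℓ₁.2.1⟩, hxW⟩
end
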